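/- arXiv:math/0001050 — 2 statements merged into one kernel-verified Lean document; each statement's English description precedes it below -/
import Mathlib

section
/- Let E ⊆ [0,1] be measurable with |E| ≤ ε for some 0 < ε ≤ 1/2, and let 𝐉 be a countable collection of pairwise disjoint subintervals of [0,1] each satisfying |E ∩ J| ≤ ε|E||J|. Then Σ_{J∈𝐉} |E ∩ J| · log(|E||J|/|E ∩ J|) ≲ ε^{1/2} |E|, where terms with |E ∩ J| = 0 are interpreted as 0, and the implied constant is absolute. -/
/-!
If `|E ∩ J| ≤ ε |E| |J|`, then `log x ≤ 2 √x` applied to `x = |E| |J| / |E ∩ J|` gives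
`|E ∩ J| log (|E| |J| / |E ∩ J|) ≤ 2 √(|E ∩ J| |E| |J|) ≤ 2 √ε |E| |J|`.
Summing over the disjoint intervals `J ⊆ [0,1]`, whose lengths add up to at most `1`, gives the
bound with constant `2`.
-/

open MeasureTheory Set
open scoped ENNReal

lemma Real.mul_log_div_le_two_sqrt_mul {ε a b : ℝ} (hε : 0 ≤ ε) (ha : 0 ≤ a) (hb : 0 ≤ b)
    (hab : a ≤ ε * b) : a * Real.log (b / a) ≤ 2 * Real.sqrt ε * b := by
  have hlog : Real.log (b / a) ≤ 2 * Real.sqrt (b / a) := by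
    have := Real.log_le_rpow_div (div_nonneg hb ha) (one_half_pos : (0 : ℝ) < 1 / 2)
    rwa [← Real.sqrt_eq_rpow, div_div_eq_mul_div, div_one, mul_comm] at this
  have hsqrt : a * Real.sqrt (b / a) = Real.sqrt (a * b) := by
    rcases eq_or_ne a 0 with rfl | ha0
    · simp
    · rw [show a * b = a ^ 2 * (b / a) by field_simp, Real.sqrt_mul (sq_nonneg a),
        Real.sqrt_sq ha]
  calc a * Real.log (b / a) ≤ a * (2 * Real.sqrt (b / a)) := mul_le_mul_of_nonneg_left hlog ha
    _ = 2 * Real.sqrt (a * b) := by rw [← hsqrt]; ring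
    _ ≤ 2 * Real.sqrt (ε * (b * b)) := by
        gcongr 2 * ?_; exact Real.sqrt_le_sqrt (by nlinarith)
    _ = 2 * Real.sqrt ε * b := by rw [Real.sqrt_mul hε, Real.sqrt_mul_self hb, mul_assoc]

lemma MeasureTheory.tsum_ofReal_le_mul_measure_iUnion {α ι : Type*} [MeasurableSpace α]
    [Countable ι] {μ : Measure α} {J : ι → Set α} (hJm : ∀ n, MeasurableSet (J n))
    (hdisj : Pairwise (Function.onFun Disjoint J)) {f : ι → ℝ} {c : ℝ} (hc : 0 ≤ c)
    (hf : ∀ n, f n ≤ c * (μ (J n)).toReal) :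
    ∑' n, ENNReal.ofReal (f n) ≤ ENNReal.ofReal c * μ (⋃ n, J n) := by
  calc ∑' n, ENNReal.ofReal (f n) ≤ ∑' n, ENNReal.ofReal c * μ (J n) := by
        refine ENNReal.tsum_le_tsum fun n => ?_
        calc ENNReal.ofReal (f n) ≤ ENNReal.ofReal c * ENNReal.ofReal (μ (J n)).toReal := by
              rw [← ENNReal.ofReal_mul hc]; exact ENNReal.ofReal_le_ofReal (hf n)
          _ ≤ ENNReal.ofReal c * μ (J n) := by gcongr; exact ENNReal.ofReal_toReal_le
    _ = ENNReal.ofReal c * μ (⋃ n, J n) := by rw [ENNReal.tsum_mul_left, measure_iUnion hdisj hJm]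

/-- If `E ⊆ [0,1]` has `|E| ≤ ε ≤ 1/2` and `𝐉` is a countable family of pairwise disjoint
subintervals of `[0,1]` with `|E∩J| ≤ ε|E||J|` for each `J`, then
`Σ_J |E∩J| log(|E||J|/|E∩J|) ≲ ε^{1/2}|E|` with an absolute constant (the terms with
`|E∩J| = 0` contribute `0`, as `0·log(·/0) = 0` in Lean's conventions). -/
theorem stmt_8 :
    ∃ C : ℝ, 0 < C ∧
      ∀ (ε : ℝ), 0 < ε → ε ≤ 1 / 2 →
      ∀ (E : Set ℝ), MeasurableSet E → E ⊆ Set.Icc (0 : ℝ) 1 → (volume E).toReal ≤ ε →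
      ∀ (J : ℕ → Set ℝ), (∀ n, (J n).OrdConnected) → (∀ n, MeasurableSet (J n)) →
        (∀ n, J n ⊆ Set.Icc (0 : ℝ) 1) →
        Pairwise (Function.onFun Disjoint J) →
        (∀ n, (volume (E ∩ J n)).toReal ≤ ε * (volume E).toReal * (volume (J n)).toReal) →
        (∑' n, ENNReal.ofReal
            ((volume (E ∩ J n)).toReal *
              Real.log ((volume E).toReal * (volume (J n)).toReal /
                (volume (E ∩ J n)).toReal))) ≤
          ENNReal.ofReal (C * Real.sqrt ε * (volume E).toReal) := by
  refine ⟨2, two_pos, fun ε hε _ E _ _ _ J _ hJm hJsub hdisj hsmall => ?_⟩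
  have hterm : ∀ n, (volume (E ∩ J n)).toReal *
      Real.log ((volume E).toReal * (volume (J n)).toReal / (volume (E ∩ J n)).toReal) ≤
        2 * Real.sqrt ε * (volume E).toReal * (volume (J n)).toReal := fun n => by
    rw [mul_assoc _ (volume E).toReal]
    exact Real.mul_log_div_le_two_sqrt_mul hε.le ENNReal.toReal_nonneg (by positivity)
      ((hsmall n).trans_eq (mul_assoc _ _ _))
  calc _ ≤ ENNReal.ofReal (2 * Real.sqrt ε * (volume E).toReal) * volume (⋃ n, J n) :=
        tsum_ofReal_le_mul_measure_iUnion hJm hdisj (by positivity) hterm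
    _ ≤ ENNReal.ofReal (2 * Real.sqrt ε * (volume E).toReal) * volume (Icc (0 : ℝ) 1) := by
        gcongr; exact iUnion_subset hJsub
    _ = _ := by simp [Real.volume_Icc]
end

section
/- Let m₀(ξ) = χ_{[1,∞)}(ξ) ψ(ξ−1) where ψ is a smooth even bump supported in {|ξ| ≤ 1/10} with ψ(0)=1. Then the inverse Fourier transform m̂₀ satisfies m̂₀(x) = e^{2πix}/(cx) + O(|x|^{-2}) for |x| ≥ 1 (for an appropriate nonzero absolute constant c), and in particular |m̂₀(x)| ≳ 1/|x| for all sufficiently large |x|. -/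
open MeasureTheory Set Real
open scoped ENNReal NNReal

/-- The inverse Fourier transform `m̂(x) = ∫ m(ξ) e^{2πixξ} dξ` of a real symbol. -/
noncomputable def invFT (m : ℝ → ℝ) (x : ℝ) : ℂ :=
  ∫ ξ : ℝ, (m ξ : ℂ) * Complex.exp (2 * Real.pi * Complex.I * x * ξ)

private lemma norm_exp_eq_one (z : ℝ) : ‖Complex.exp (2 * Real.pi * Complex.I * z)‖ = 1 := by
  rw [Complex.norm_exp]
  simp

private lemma norm_exp_mul_eq_one (x t : ℝ) :
    ‖Complex.exp (2 * Real.pi * Complex.I * x * t)‖ = 1 := by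
  rw [Complex.norm_exp]
  simp

private lemma key (ψ : ℝ → ℝ) (hψ : ContDiff ℝ (⊤ : ℕ∞) ψ)
    (hsupp : Function.support ψ ⊆ {ξ : ℝ | |ξ| ≤ 1 / 10}) (hψ0 : ψ 0 = 1) :
    ∃ C : ℝ, 0 < C ∧ ∀ x : ℝ, 1 ≤ |x| →
      ‖invFT (fun ξ => Set.indicator (Set.Ici (1 : ℝ)) (fun t => ψ (t - 1)) ξ) x -
          Complex.exp (2 * Real.pi * Complex.I * x) / ((-(2 * Real.pi * Complex.I)) * x)‖
        ≤ C / x ^ 2 := by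
  -- vanishing of ψ and its derivatives away from the support
  have hclosed : IsClosed {ξ : ℝ | |ξ| ≤ 1 / 10} := isClosed_le (by continuity) continuous_const
  have htsupp : tsupport ψ ⊆ {ξ : ℝ | |ξ| ≤ 1 / 10} := hclosed.closure_subset_iff.2 hsupp
  have hzero : ∀ s : ℝ, 1 / 10 < |s| → ψ s = 0 := by
    intro s hs
    by_contra h
    exact absurd (hsupp (Function.mem_support.2 h)) (not_le.2 hs)
  have hdzero : ∀ s : ℝ, 1 / 10 < |s| → deriv ψ s = 0 := by
    intro s hs
    by_contra h
    exact absurd (htsupp (support_deriv_subset (Function.mem_support.2 h))) (not_le.2 hs)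
  -- smoothness of derivatives
  have hψtop : ContDiff ℝ ((⊤:ℕ∞):WithTop ℕ∞) ψ := hψ.of_le (by simp)
  have hψ' : ContDiff ℝ ((⊤:ℕ∞):WithTop ℕ∞) (deriv ψ) := (contDiff_infty_iff_deriv.mp hψtop).2
  have hψ'' : Continuous (deriv (deriv ψ)) := (contDiff_infty_iff_deriv.mp hψ').2.continuous
  -- bound on the second derivative
  obtain ⟨M, hM⟩ := (isCompact_Icc (a := (0:ℝ)) (b := 1)).exists_bound_of_continuousOn
    hψ''.continuousOn
  have hM0 : 0 ≤ M := le_trans (norm_nonneg _) (hM 0 (by norm_num))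
  refine ⟨(|deriv ψ 0| + M + 1) / (4 * Real.pi ^ 2), by positivity, ?_⟩
  intro x hx
  have hxne : (x : ℝ) ≠ 0 := by intro h; rw [h, abs_zero] at hx; linarith
  have hxpos : 0 < |x| := abs_pos.2 hxne
  set A : ℂ := 2 * Real.pi * Complex.I * x with hA_def
  have hA : A ≠ 0 := by
    rw [hA_def]
    refine mul_ne_zero (mul_ne_zero (mul_ne_zero two_ne_zero ?_) Complex.I_ne_zero) ?_
    · exact_mod_cast Real.pi_ne_zero
    · exact_mod_cast hxne
  have hAnorm : ‖A‖ = 2 * Real.pi * |x| := by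
    rw [hA_def]
    simp [map_mul, abs_of_pos Real.pi_pos]
  -- the three functions
  set u : ℝ → ℂ := fun t => ((ψ (t - 1) : ℝ) : ℂ) with hu_def
  set u' : ℝ → ℂ := fun t => ((deriv ψ (t - 1) : ℝ) : ℂ) with hu'_def
  set u'' : ℝ → ℂ := fun t => ((deriv (deriv ψ) (t - 1) : ℝ) : ℂ) with hu''_def
  set v : ℝ → ℂ := fun t => Complex.exp (A * t) / A with hv_def
  set v' : ℝ → ℂ := fun t => Complex.exp (A * t) with hv'_def
  have hvd : ∀ t ∈ Set.uIcc (1:ℝ) 2, HasDerivAt v (v' t) t := by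
    intro t _
    have h0 : HasDerivAt (fun s : ℝ => (s : ℂ)) 1 t := by
      simpa using (hasDerivAt_id t).ofReal_comp
    have hexp := ((h0.const_mul A).cexp)
    simpa [hv_def, hv'_def, mul_comm, mul_div_cancel_left₀ _ hA] using hexp.div_const A
  have hud : ∀ t ∈ Set.uIcc (1:ℝ) 2, HasDerivAt u (u' t) t := by
    intro t _
    have h1 : HasDerivAt (fun s : ℝ => ψ (s - 1)) (deriv ψ (t - 1)) t := by
      simpa [Function.comp_def] using (((hψtop.differentiable (by simp)) (t-1)).hasDerivAt).comp t
        ((hasDerivAt_id t).sub_const 1)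
    exact h1.ofReal_comp
  have hu'd : ∀ t ∈ Set.uIcc (1:ℝ) 2, HasDerivAt u' (u'' t) t := by
    intro t _
    have h1 : HasDerivAt (fun s : ℝ => deriv ψ (s - 1)) (deriv (deriv ψ) (t - 1)) t := by
      simpa [Function.comp_def] using (((hψ'.differentiable (by simp)) (t-1)).hasDerivAt).comp t
        ((hasDerivAt_id t).sub_const 1)
    exact h1.ofReal_comp
  have hu'c : Continuous u' := by
    exact Complex.continuous_ofReal.comp
      (hψ'.continuous.comp (continuous_id.sub continuous_const))
  have hu''c : Continuous u'' := by
    exact Complex.continuous_ofReal.comp (hψ''.comp (continuous_id.sub continuous_const))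
  have hv'c : Continuous v' := by
    exact Complex.continuous_exp.comp (continuous_const.mul Complex.continuous_ofReal)
  have hvc : Continuous v := hv'c.div_const A
  -- Step 1: rewrite the integral as an interval integral
  have step1 : invFT (fun ξ => Set.indicator (Set.Ici (1 : ℝ)) (fun t => ψ (t - 1)) ξ) x
      = ∫ t in (1:ℝ)..2, u t * v' t := by
    have e1 : (fun ξ : ℝ => ((Set.indicator (Set.Ici (1 : ℝ)) (fun t => ψ (t - 1)) ξ : ℝ) : ℂ)
          * Complex.exp (2 * Real.pi * Complex.I * x * ξ))
        = Set.indicator (Set.Ici (1:ℝ)) (fun ξ => u ξ * v' ξ) := by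
      funext ξ
      by_cases hξ : ξ ∈ Set.Ici (1:ℝ) <;>
        simp [Set.indicator_of_mem, Set.indicator_of_notMem, hξ, hu_def, hv'_def, hA_def,
          mul_assoc]
    have e2 : Set.indicator (Set.Ici (1:ℝ)) (fun ξ => u ξ * v' ξ)
        = Set.indicator (Set.Icc (1:ℝ) 2) (fun ξ => u ξ * v' ξ) := by
      funext ξ
      by_cases h1 : ξ ∈ Set.Ici (1:ℝ)
      · by_cases h2 : ξ ∈ Set.Icc (1:ℝ) 2
        · rw [Set.indicator_of_mem h1, Set.indicator_of_mem h2]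
        · have hgt : (2:ℝ) < ξ := by
            rcases lt_or_ge (2:ℝ) ξ with h | h
            · exact h
            · exact absurd ⟨h1, h⟩ h2
          have : ψ (ξ - 1) = 0 := hzero _ (by rw [abs_of_pos (by linarith)]; linarith)
          rw [Set.indicator_of_mem h1, Set.indicator_of_notMem h2, hu_def]
          simp [this]
      · have h2 : ξ ∉ Set.Icc (1:ℝ) 2 := fun h => h1 h.1
        rw [Set.indicator_of_notMem h1, Set.indicator_of_notMem h2]
    rw [invFT, e1, e2, integral_indicator measurableSet_Icc,
      MeasureTheory.integral_Icc_eq_integral_Ioc, ← intervalIntegral.integral_of_le one_le_two]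
  -- integration by parts, twice
  have ibp1 : ∫ t in (1:ℝ)..2, u t * v' t
      = u 2 * v 2 - u 1 * v 1 - ∫ t in (1:ℝ)..2, u' t * v t :=
    intervalIntegral.integral_mul_deriv_eq_deriv_mul hud hvd
      (hu'c.intervalIntegrable 1 2) (hv'c.intervalIntegrable 1 2)
  have ibp2 : ∫ t in (1:ℝ)..2, u' t * v' t
      = u' 2 * v 2 - u' 1 * v 1 - ∫ t in (1:ℝ)..2, u'' t * v t :=
    intervalIntegral.integral_mul_deriv_eq_deriv_mul hu'd hvd
      (hu''c.intervalIntegrable 1 2) (hv'c.intervalIntegrable 1 2)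
  -- boundary values
  have hu2 : u 2 = 0 := by
    rw [hu_def]; norm_num
    exact hzero 1 (by rw [abs_one]; norm_num)
  have hu1 : u 1 = 1 := by rw [hu_def]; norm_num [hψ0]
  have hu'2 : u' 2 = 0 := by
    rw [hu'_def]; norm_num
    exact hdzero 1 (by rw [abs_one]; norm_num)
  have hv1 : v 1 = Complex.exp A / A := by rw [hv_def]; norm_num
  -- pull the constant 1/A out
  have pull : ∫ t in (1:ℝ)..2, u' t * v t = (∫ t in (1:ℝ)..2, u' t * v' t) / A := by
    rw [← intervalIntegral.integral_div]
    congr 1; funext t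
    rw [hv_def, hv'_def, mul_div_assoc]
  set J : ℂ := ∫ t in (1:ℝ)..2, u' t * v' t with hJ_def
  -- bound on the remainder integral in ibp2
  have hlast : ‖∫ t in (1:ℝ)..2, u'' t * v t‖ ≤ M / (2 * Real.pi * |x|) := by
    have hb : ∀ t ∈ Set.uIoc (1:ℝ) 2, ‖u'' t * v t‖ ≤ M / (2 * Real.pi * |x|) := by
      intro t ht
      rw [Set.uIoc_of_le one_le_two] at ht
      have ht01 : t - 1 ∈ Set.Icc (0:ℝ) 1 := ⟨by linarith [ht.1], by linarith [ht.2]⟩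
      have h1 : ‖u'' t‖ ≤ M := by
        rw [hu''_def]
        simpa [Complex.norm_real] using hM _ ht01
      have h2 : ‖v t‖ = 1 / (2 * Real.pi * |x|) := by
        rw [hv_def]
        simp only [norm_div, hAnorm]
        rw [hA_def]
        have := norm_exp_mul_eq_one x t
        rw [show (2 * (Real.pi:ℂ) * Complex.I * x * t) = 2 * (Real.pi:ℂ) * Complex.I * (x * t) by
          push_cast; ring] at this ⊢
        rw [show ((x:ℂ) * t) = ((x * t : ℝ) : ℂ) by push_cast; ring]
        rw [norm_exp_eq_one (x * t)]
      calc ‖u'' t * v t‖ = ‖u'' t‖ * ‖v t‖ := norm_mul _ _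
        _ ≤ M * (1 / (2 * Real.pi * |x|)) := by
            rw [h2]
            exact mul_le_mul_of_nonneg_right h1 (by positivity)
        _ = M / (2 * Real.pi * |x|) := by ring
    have := intervalIntegral.norm_integral_le_of_norm_le_const hb
    simpa [show |(2:ℝ)-1| = 1 by norm_num] using this
  -- bound on J
  have hexpA : ‖Complex.exp A‖ = 1 := by rw [hA_def]; exact norm_exp_mul_eq_one x 1 ▸ (by
    rw [hA_def] at *
    have := norm_exp_mul_eq_one x 1
    simpa using this)
  have hJbound : ‖J‖ ≤ (|deriv ψ 0| + M) / (2 * Real.pi * |x|) := by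
    rw [ibp2, hu'2, hv1]
    have h1 : ‖u' 1 * (Complex.exp A / A)‖ = |deriv ψ 0| / (2 * Real.pi * |x|) := by
      rw [norm_mul, norm_div, hexpA, hAnorm, hu'_def]
      simp [Complex.norm_real]
      ring
    calc ‖0 * v 2 - u' 1 * (Complex.exp A / A)
            - ∫ t in (1:ℝ)..2, u'' t * v t‖
        ≤ ‖0 * v 2 - u' 1 * (Complex.exp A / A)‖
            + ‖∫ t in (1:ℝ)..2, u'' t * v t‖ := norm_sub_le _ _
      _ ≤ |deriv ψ 0| / (2 * Real.pi * |x|) + M / (2 * Real.pi * |x|) := by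
          refine add_le_add ?_ hlast
          rw [zero_mul, zero_sub, norm_neg, h1]
      _ = (|deriv ψ 0| + M) / (2 * Real.pi * |x|) := by ring
  -- assemble
  have main : invFT (fun ξ => Set.indicator (Set.Ici (1 : ℝ)) (fun t => ψ (t - 1)) ξ) x
      - Complex.exp (2 * Real.pi * Complex.I * x) / ((-(2 * Real.pi * Complex.I)) * x)
      = -(J / A) := by
    rw [step1, ibp1, hu2, hu1, hv1, pull]
    have hcx : ((-(2 * Real.pi * Complex.I)) * x : ℂ) = -A := by rw [hA_def]; ring
    rw [hcx]
    have hexpeq : Complex.exp (2 * Real.pi * Complex.I * x) = Complex.exp A := by rw [hA_def]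
    rw [hexpeq, div_neg]
    ring
  rw [main]
  have hn : ‖-(J / A)‖ = ‖J‖ / (2 * Real.pi * |x|) := by
    rw [norm_neg, norm_div, hAnorm]
  rw [hn]
  have hstep : ‖J‖ / (2 * Real.pi * |x|)
      ≤ ((|deriv ψ 0| + M) / (2 * Real.pi * |x|)) / (2 * Real.pi * |x|) :=
    div_le_div_of_nonneg_right hJbound (by positivity)
  refine hstep.trans ?_
  have hx2 : x ^ 2 = |x| ^ 2 := (sq_abs x).symm
  rw [hx2, div_div, div_div]
  have hden : 2 * Real.pi * |x| * (2 * Real.pi * |x|) = 4 * Real.pi ^ 2 * |x| ^ 2 := by ring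
  rw [hden]
  exact div_le_div_of_nonneg_right (by linarith) (by positivity)

/-- For `m₀(ξ) = χ_{[1,∞)}(ξ) ψ(ξ-1)` with `ψ` a smooth even bump supported in `{|ξ| ≤ 1/10}`
and `ψ(0) = 1`, one has `m̂₀(x) = e^{2πix}/(cx) + O(|x|^{-2})` for `|x| ≥ 1` with some nonzero
absolute constant `c`, and in particular `|m̂₀(x)| ≳ 1/|x|` for all sufficiently large `|x|`. -/
theorem stmt_13 :
    ∃ c : ℂ, c ≠ 0 ∧
      ∀ (ψ : ℝ → ℝ), ContDiff ℝ (⊤ : ℕ∞) ψ → (∀ ξ, ψ (-ξ) = ψ ξ) →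
        (Function.support ψ ⊆ {ξ : ℝ | |ξ| ≤ 1 / 10}) → ψ 0 = 1 →
        (∃ C : ℝ, 0 < C ∧ ∀ x : ℝ, 1 ≤ |x| →
          ‖invFT (fun ξ => Set.indicator (Set.Ici (1 : ℝ)) (fun t => ψ (t - 1)) ξ) x -
              Complex.exp (2 * Real.pi * Complex.I * x) / (c * x)‖ ≤ C / x ^ 2) ∧
        (∃ c' R : ℝ, 0 < c' ∧ ∀ x : ℝ, R ≤ |x| →
          c' / |x| ≤
            ‖invFT (fun ξ => Set.indicator (Set.Ici (1 : ℝ)) (fun t => ψ (t - 1)) ξ) x‖) := by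
  refine ⟨-(2 * Real.pi * Complex.I), ?_, ?_⟩
  · refine neg_ne_zero.2 (mul_ne_zero (mul_ne_zero two_ne_zero ?_) Complex.I_ne_zero)
    exact_mod_cast Real.pi_ne_zero
  intro ψ hψ _ hsupp hψ0
  obtain ⟨C, hC, hest⟩ := key ψ hψ hsupp hψ0
  refine ⟨⟨C, hC, hest⟩, 1 / (4 * Real.pi), max 1 (4 * Real.pi * C), by positivity, ?_⟩
  intro x hxR
  have hx1 : (1:ℝ) ≤ |x| := le_trans (le_max_left _ _) hxR
  have hxC : 4 * Real.pi * C ≤ |x| := le_trans (le_max_right _ _) hxR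
  have hxpos : (0:ℝ) < |x| := lt_of_lt_of_le one_pos hx1
  have hxne : x ≠ 0 := by
    intro h; rw [h] at hxpos; simp at hxpos
  have h := hest x hx1
  set a := invFT (fun ξ => Set.indicator (Set.Ici (1 : ℝ)) (fun t => ψ (t - 1)) ξ) x with ha
  set b := Complex.exp (2 * Real.pi * Complex.I * x) / ((-(2 * Real.pi * Complex.I)) * x) with hb
  have hbn : ‖b‖ = 1 / (2 * Real.pi * |x|) := by
    rw [hb, norm_div, norm_mul]
    have h1 : ‖Complex.exp (2 * Real.pi * Complex.I * x)‖ = 1 := norm_exp_mul_eq_one x 1 ▸ (by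
      have := norm_exp_mul_eq_one x 1
      simpa using this)
    have h2 : ‖(-(2 * Real.pi * Complex.I) : ℂ)‖ = 2 * Real.pi := by
      simp [map_mul, abs_of_pos Real.pi_pos]
    have h3 : ‖(x:ℂ)‖ = |x| := by simp [Complex.norm_real]
    rw [h1, h2, h3]
  have htri : ‖b‖ - ‖a - b‖ ≤ ‖a‖ := by
    have := norm_sub_norm_le b a
    rw [norm_sub_rev b a] at this
    linarith
  have h4 : C / x ^ 2 ≤ 1 / (4 * Real.pi * |x|) := by
    rw [div_le_div_iff₀ (by positivity) (by positivity), ← sq_abs x]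
    nlinarith [Real.pi_pos, hxpos, hC]
  have h5 : 1 / (4 * Real.pi) / |x| = 1 / (4 * Real.pi * |x|) := by
    rw [div_div]
  rw [h5]
  have : 1 / (2 * Real.pi * |x|) - 1 / (4 * Real.pi * |x|) = 1 / (4 * Real.pi * |x|) := by
    field_simp
    ring
  linarith [hbn ▸ htri, h.trans h4, this]
end
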